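/- Let Ṽ be a finite type, 𝔥̃ : Matrix Ṽ V (ZMod 2) a matrix with 𝔥 * 𝔥̃ᵀ = 0 (matrix product over ZMod 2), and g : Ṽ → ℝ with g ṽ > 0 for all ṽ. Define the CSS-deformed Hamiltonian H'_new : ℋ → ℋ by (H'_new ψ)(σ) := (H'ψ)(σ) + 2·(Σ over ṽ ∈ Ṽ with r̃_{ṽ}·σ = 1 of g ṽ)·ψ(σ), where r̃_{ṽ} v := 𝔥̃ ṽ v and r̃_{ṽ}·σ := Σ_v (𝔥̃ ṽ v)·(σ v) ∈ ZMod 2. Then the kernel of H'_new equals the ℂ-linear span of {δ₀} ∪ {ψ_a : a ∈ ker 𝔥}, where ψ_a(σ) := (−1)^{a·σ} if 𝔥̃.mulVec σ = 0 and ψ_a(σ) := 0 otherwise. -/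

import Mathlib

open scoped Classical
set_option linter.unusedSectionVars false

section

/-- The bipartite (Tanner) graph on `Vhat ⊕ V` associated to the biadjacency matrix `𝔥`. -/
def bipGraph {Vhat V : Type*} (𝔥 : Matrix Vhat V (ZMod 2)) : SimpleGraph (Vhat ⊕ V) where
  Adj x y := match x, y with
    | Sum.inl a, Sum.inr b => 𝔥 a b = 1
    | Sum.inr b, Sum.inl a => 𝔥 a b = 1
    | _, _ => False
  symm := ⟨by intro x y hxy; cases x <;> cases y <;> simp_all⟩
  loopless := ⟨by intro x hx; cases x <;> simp_all⟩

namespace CssAux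

variable {Vhat V : Type*} [Fintype Vhat] [Fintype V] [DecidableEq Vhat] [DecidableEq V]

/-- parity marker of a vertex -/
def par : Vhat ⊕ V → ZMod 2 := Sum.elim (fun _ => 0) (fun _ => 1)

variable (𝔥 : Matrix Vhat V (ZMod 2))

lemma adj_rl {v : V} {w : Vhat} : (bipGraph 𝔥).Adj (Sum.inr v) (Sum.inl w) ↔ 𝔥 w v = 1 :=
  Iff.rfl

lemma adj_lr {v : V} {w : Vhat} : (bipGraph 𝔥).Adj (Sum.inl w) (Sum.inr v) ↔ 𝔥 w v = 1 :=
  Iff.rfl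

lemma adj_par {x y : Vhat ⊕ V} (h : (bipGraph 𝔥).Adj x y) : par x + par y = 1 := by
  cases x <;> cases y <;> simp [bipGraph] at h ⊢ <;> rfl

lemma walk_par {x y : Vhat ⊕ V} (p : (bipGraph 𝔥).Walk x y) :
    (p.length : ZMod 2) = par x + par y := by
  induction p with
  | nil => simp [CharTwo.add_self_eq_zero]
  | @cons x y' z h q ih =>
    have h1 : par x + par y' = 1 := adj_par 𝔥 h
    have key : ∀ a b c : ZMod 2, a + b = 1 → b + c + 1 = a + c := by decide
    rw [SimpleGraph.Walk.length_cons]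
    push_cast
    rw [ih]
    exact key _ _ _ h1

variable {𝔥}
variable (hconn : (bipGraph 𝔥).Connected)
include hconn

lemma dist_par (x y : Vhat ⊕ V) :
    (((bipGraph 𝔥).dist x y : ℕ) : ZMod 2) = par x + par y := by
  obtain ⟨p, hp⟩ := hconn.exists_walk_length_eq_dist x y
  rw [← hp]; exact walk_par 𝔥 p

lemma par_of_dist {x z : Vhat ⊕ V} {k : ℕ} (h : (bipGraph 𝔥).dist x z = k) :
    par z = par x + ((k : ℕ) : ZMod 2) := by
  have hd := dist_par hconn x z
  rw [h] at hd
  rw [hd]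
  generalize par x = t; generalize par z = s
  revert t s; decide

lemma dist_rl_odd (v : V) (w : Vhat) :
    (((bipGraph 𝔥).dist (Sum.inr v) (Sum.inl w) : ℕ) : ZMod 2) = 1 := by
  have := dist_par hconn (Sum.inr v : Vhat ⊕ V) (Sum.inl w)
  simpa [par] using this

lemma dist_rr_even (u v : V) :
    (((bipGraph 𝔥).dist (Sum.inr u) (Sum.inr v) : ℕ) : ZMod 2) = 0 := by
  have := dist_par hconn (Sum.inr u : Vhat ⊕ V) (Sum.inr v)
  simpa [par, CharTwo.add_self_eq_zero] using this

lemma three_le_dist_of_not_adj {v : V} {w : Vhat} (h : ¬ 𝔥 w v = 1) :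
    3 ≤ (bipGraph 𝔥).dist (Sum.inr v) (Sum.inl w) := by
  have hodd := dist_rl_odd hconn v w
  have h0 : (bipGraph 𝔥).dist (Sum.inr v) (Sum.inl w) ≠ 0 := by
    intro h0; rw [h0] at hodd; simp at hodd
  have h1 : (bipGraph 𝔥).dist (Sum.inr v) (Sum.inl w) ≠ 1 := by
    intro h1
    exact h ((adj_rl 𝔥).mp (SimpleGraph.dist_eq_one_iff_adj.mp h1))
  have h2 : (bipGraph 𝔥).dist (Sum.inr v) (Sum.inl w) ≠ 2 := by
    intro h2; rw [h2] at hodd; revert hodd; decide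
  omega

omit hconn in
lemma dist_eq_one_of_adj {v : V} {w : Vhat} (h : 𝔥 w v = 1) :
    (bipGraph 𝔥).dist (Sum.inr v) (Sum.inl w) = 1 :=
  SimpleGraph.dist_eq_one_iff_adj.mpr ((adj_rl 𝔥).mpr h)

omit hconn in
lemma not_adj_of_dist_eq_three {v : V} {w : Vhat}
    (h : (bipGraph 𝔥).dist (Sum.inr v) (Sum.inl w) = 3) : 𝔥 w v = 0 := by
  rcases (by decide : ∀ a : ZMod 2, a = 0 ∨ a = 1) (𝔥 w v) with h' | h'
  · exact h'
  · exfalso; have := dist_eq_one_of_adj (𝔥 := 𝔥) h'; omega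

lemma exists_neighbor [Nonempty Vhat] (v : V) : ∃ w : Vhat, 𝔥 w v = 1 := by
  obtain ⟨w₀⟩ := ‹Nonempty Vhat›
  obtain ⟨p⟩ := hconn.preconnected (Sum.inr v) (Sum.inl w₀)
  cases p with
  | @cons _ y _ h q =>
    cases y with
    | inl w => exact ⟨w, (adj_rl 𝔥).mp h⟩
    | inr u => simp [bipGraph] at h

lemma exists_neighbor_hat [Nonempty V] (w : Vhat) : ∃ v : V, 𝔥 w v = 1 := by
  obtain ⟨v₀⟩ := ‹Nonempty V›
  obtain ⟨p⟩ := hconn.preconnected (Sum.inl w) (Sum.inr v₀)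
  cases p with
  | @cons _ y _ h q =>
    cases y with
    | inr v => exact ⟨v, (adj_lr 𝔥).mp h⟩
    | inl u => simp [bipGraph] at h

lemma dist_getVert_le {x y : Vhat ⊕ V} (p : (bipGraph 𝔥).Walk x y) (k : ℕ) :
    (bipGraph 𝔥).dist x (p.getVert k) ≤ k := by
  induction p generalizing k with
  | nil => simp [SimpleGraph.Walk.getVert, SimpleGraph.dist_self]
  | @cons a b c h q ih =>
    cases k with
    | zero => simp [SimpleGraph.Walk.getVert, SimpleGraph.dist_self]
    | succ k =>
      have h1 : (bipGraph 𝔥).dist a b ≤ 1 := by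
        simpa using SimpleGraph.dist_le (SimpleGraph.Walk.cons h SimpleGraph.Walk.nil)
      calc (bipGraph 𝔥).dist a ((SimpleGraph.Walk.cons h q).getVert (k+1))
          ≤ (bipGraph 𝔥).dist a b + (bipGraph 𝔥).dist b (q.getVert k) :=
            hconn.dist_triangle
        _ ≤ 1 + k := by
            have := ih k
            omega
        _ = k + 1 := by omega

lemma dist_getVert_right {x y : Vhat ⊕ V} (p : (bipGraph 𝔥).Walk x y) (k : ℕ) :
    (bipGraph 𝔥).dist (p.getVert k) y ≤ p.length - k := by
  induction p generalizing k with
  | nil => simp [SimpleGraph.Walk.getVert]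
  | @cons a b c h q ih =>
    cases k with
    | zero =>
      simpa [SimpleGraph.Walk.getVert] using
        SimpleGraph.dist_le (SimpleGraph.Walk.cons h q)
    | succ k =>
      have := ih k
      simpa [SimpleGraph.Walk.getVert] using this

/-- intermediate points on geodesics -/
lemma exists_mid {x y : Vhat ⊕ V} {n k : ℕ}
    (hd : (bipGraph 𝔥).dist x y = n) (hk : k + 1 ≤ n) :
    ∃ z z' : Vhat ⊕ V, (bipGraph 𝔥).Adj z z' ∧
      (bipGraph 𝔥).dist x z = k ∧ (bipGraph 𝔥).dist x z' = k + 1 ∧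
      (bipGraph 𝔥).dist z y = n - k ∧ (bipGraph 𝔥).dist z' y = n - (k + 1) := by
  obtain ⟨p, hp⟩ := hconn.exists_walk_length_eq_dist x y
  rw [hd] at hp
  refine ⟨p.getVert k, p.getVert (k + 1), p.adj_getVert_succ (by omega), ?_, ?_, ?_, ?_⟩
  all_goals {
    have h1 := dist_getVert_le hconn p k
    have h1' := dist_getVert_le hconn p (k + 1)
    have h2 := dist_getVert_right hconn p k
    have h2' := dist_getVert_right hconn p (k + 1)
    rw [hp] at h2 h2'
    have t1 : (bipGraph 𝔥).dist x y ≤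
        (bipGraph 𝔥).dist x (p.getVert k) + (bipGraph 𝔥).dist (p.getVert k) y :=
      hconn.dist_triangle
    have t2 : (bipGraph 𝔥).dist x y ≤
        (bipGraph 𝔥).dist x (p.getVert (k+1)) + (bipGraph 𝔥).dist (p.getVert (k+1)) y :=
      hconn.dist_triangle
    omega
  }

lemma eq_inr_of_par {z : Vhat ⊕ V} (h : par z = (1 : ZMod 2)) : ∃ u : V, z = Sum.inr u := by
  cases z with
  | inl w => exfalso; revert h; simp [par]
  | inr u => exact ⟨u, rfl⟩

lemma eq_inl_of_par {z : Vhat ⊕ V} (h : par z = (0 : ZMod 2)) : ∃ w : Vhat, z = Sum.inl w := by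
  cases z with
  | inl w => exact ⟨w, rfl⟩
  | inr u => exfalso; revert h; simp [par]


section Ball

variable [Nonempty Vhat] [Nonempty V]
variable {D Dhat : ℕ}
variable (hdegV : ∀ v : V, (Finset.univ.filter fun w : Vhat => 𝔥 w v = 1).card ≤ D)
variable (hdegVhat : ∀ w : Vhat, (Finset.univ.filter fun v : V => 𝔥 w v = 1).card ≤ Dhat)
variable (hcard : 2 * D * Dhat < Fintype.card V)

include hdegV hdegVhat in
lemma ball_card (v : V) :
    (Finset.univ.filter fun u : V => (bipGraph 𝔥).dist (Sum.inr u) (Sum.inr v) ≤ 2).card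
      ≤ D * Dhat := by
  classical
  have hsub : (Finset.univ.filter fun u : V => (bipGraph 𝔥).dist (Sum.inr u) (Sum.inr v) ≤ 2)
      ⊆ (Finset.univ.filter fun w : Vhat => 𝔥 w v = 1).biUnion
          (fun w => Finset.univ.filter fun u : V => 𝔥 w u = 1) := by
    intro u hu
    simp only [Finset.mem_filter, Finset.mem_univ, true_and] at hu
    have heven := dist_rr_even hconn u v
    simp only [Finset.mem_biUnion, Finset.mem_filter, Finset.mem_univ, true_and]
    rcases Nat.lt_or_ge ((bipGraph 𝔥).dist (Sum.inr u) (Sum.inr v)) 1 with h0 | h1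
    · -- dist = 0, so u = v
      have h0' : (bipGraph 𝔥).dist (Sum.inr u) (Sum.inr v) = 0 := by omega
      have : (Sum.inr u : Vhat ⊕ V) = Sum.inr v := (hconn.dist_eq_zero_iff).mp h0'
      obtain ⟨w, hw⟩ := exists_neighbor hconn v
      have huv : u = v := by injection this
      exact ⟨w, hw, by rw [huv]; exact hw⟩
    · -- dist = 2
      have h2 : (bipGraph 𝔥).dist (Sum.inr u) (Sum.inr v) = 2 := by
        have hne1 : (bipGraph 𝔥).dist (Sum.inr u) (Sum.inr v) ≠ 1 := by
          intro h; rw [h] at heven; revert heven; decide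
        omega
      obtain ⟨z, z', hadj, hdz, hdz', _, hz'y⟩ := exists_mid hconn h2 (le_refl 2)
      -- z at distance 1 from (inr u), z' at distance 2 with dist z' (inr v) = 0
      have hz'v : z' = Sum.inr v := (hconn.dist_eq_zero_iff).mp (by omega)
      have hparz : par z = (0 : ZMod 2) := by
        have h := par_of_dist hconn hdz
        rw [h]
        simp [par]
        decide
      obtain ⟨w, rfl⟩ := eq_inl_of_par hconn hparz
      have hadj1 : (bipGraph 𝔥).Adj (Sum.inr u) (Sum.inl w) :=
        SimpleGraph.dist_eq_one_iff_adj.mp hdz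
      rw [hz'v] at hadj
      exact ⟨w, (adj_lr 𝔥).mp hadj, (adj_rl 𝔥).mp hadj1⟩
  calc _ ≤ _ := Finset.card_le_card hsub
    _ ≤ ∑ w ∈ Finset.univ.filter (fun w : Vhat => 𝔥 w v = 1),
          (Finset.univ.filter fun u : V => 𝔥 w u = 1).card := Finset.card_biUnion_le
    _ ≤ ∑ _w ∈ Finset.univ.filter (fun w : Vhat => 𝔥 w v = 1), Dhat :=
        Finset.sum_le_sum (fun w _ => hdegVhat w)
    _ = (Finset.univ.filter (fun w : Vhat => 𝔥 w v = 1)).card * Dhat := by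
        simp [Finset.sum_const, Nat.smul_one_eq_cast, mul_comm]
    _ ≤ D * Dhat := Nat.mul_le_mul_right _ (hdegV v)

include hdegV hdegVhat hcard in
lemma exists_far (v1 v2 : V) :
    ∃ u : V, 4 ≤ (bipGraph 𝔥).dist (Sum.inr u) (Sum.inr v1) ∧
      4 ≤ (bipGraph 𝔥).dist (Sum.inr u) (Sum.inr v2) := by
  classical
  have h1 := ball_card hconn hdegV hdegVhat v1
  have h2 := ball_card hconn hdegV hdegVhat v2
  have hle := Finset.card_union_le
    (Finset.univ.filter fun u : V => (bipGraph 𝔥).dist (Sum.inr u) (Sum.inr v1) ≤ 2)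
    (Finset.univ.filter fun u : V => (bipGraph 𝔥).dist (Sum.inr u) (Sum.inr v2) ≤ 2)
  have hmul : 2 * (D * Dhat) = 2 * D * Dhat := by ring
  have hB : ((Finset.univ.filter fun u : V => (bipGraph 𝔥).dist (Sum.inr u) (Sum.inr v1) ≤ 2) ∪
      (Finset.univ.filter fun u : V => (bipGraph 𝔥).dist (Sum.inr u) (Sum.inr v2) ≤ 2)).card
        < Fintype.card V := by omega
  have : ∃ u : V, u ∉ ((Finset.univ.filter fun u : V =>
      (bipGraph 𝔥).dist (Sum.inr u) (Sum.inr v1) ≤ 2) ∪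
      (Finset.univ.filter fun u : V => (bipGraph 𝔥).dist (Sum.inr u) (Sum.inr v2) ≤ 2)) := by
    by_contra hcon
    push_neg at hcon
    have hsub : (Finset.univ : Finset V) ⊆ _ := fun u _ => hcon u
    have := Finset.card_le_card hsub
    simp only [Finset.card_univ] at this
    omega
  obtain ⟨u, hu⟩ := this
  simp only [Finset.mem_union, Finset.mem_filter, Finset.mem_univ, true_and,
    not_or, not_le] at hu
  obtain ⟨hu1, hu2⟩ := hu
  have hne3 : ∀ n : ℕ, ((n : ℕ) : ZMod 2) = 0 → n ≠ 3 := by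
    intro n hcast h3'
    rw [h3'] at hcast; revert hcast; decide
  have e1 := dist_rr_even hconn u v1
  have e2 := dist_rr_even hconn u v2
  have := hne3 _ e1
  have := hne3 _ e2
  exact ⟨u, by omega, by omega⟩

end Ball

/-! ### the flip dynamics -/

/-- the row vector `r_w` -/
def rowf (𝔥 : Matrix Vhat V (ZMod 2)) (w : Vhat) : V → ZMod 2 := fun v => 𝔥 w v

omit hconn

/-- One active move of the dynamics. -/
def stepR (𝔥 : Matrix Vhat V (ZMod 2)) (σ τ : V → ZMod 2) : Prop :=
  ∃ w v, (bipGraph 𝔥).dist (Sum.inr v) (Sum.inl w) = 3 ∧ σ v = 1 ∧ τ = σ + rowf 𝔥 w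

/-- Reachability under active moves. -/
def conn (𝔥 : Matrix Vhat V (ZMod 2)) : (V → ZMod 2) → (V → ZMod 2) → Prop :=
  Relation.ReflTransGen (stepR 𝔥)

lemma add_add_cancel (f g : V → ZMod 2) : f + g + g = f := by
  funext v
  simp only [Pi.add_apply]
  generalize f v = a; generalize g v = b
  revert a b; decide

lemma stepR_symm : Symmetric (stepR 𝔥) := by
  rintro σ τ ⟨w, v, h3, hv, rfl⟩
  refine ⟨w, v, h3, ?_, (add_add_cancel σ (rowf 𝔥 w)).symm⟩
  have h0 : 𝔥 w v = 0 := not_adj_of_dist_eq_three (𝔥 := 𝔥) h3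
  simp [Pi.add_apply, rowf, h0, hv]

lemma conn_symm {σ τ : V → ZMod 2} (h : conn 𝔥 σ τ) : conn 𝔥 τ σ :=
  (@Relation.ReflTransGen.symmetric _ _ ⟨fun _ _ h' => stepR_symm (𝔥 := 𝔥) h'⟩).symm _ _ h

include hconn

/-- THE TOOL: if `σ` has support at distance `≥ 3` from `w₀` then the move `w₀`
can be performed (through a chain). -/
lemma tool : ∀ (m : ℕ) (σ : V → ZMod 2) (w₀ : Vhat) (v : V), σ v = 1 →
    3 ≤ (bipGraph 𝔥).dist (Sum.inr v) (Sum.inl w₀) →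
    (bipGraph 𝔥).dist (Sum.inr v) (Sum.inl w₀) ≤ m →
    conn 𝔥 σ (σ + rowf 𝔥 w₀) := by
  intro m
  induction m using Nat.strong_induction_on with
  | _ m IH =>
    intro σ w₀ v hv h3 hm
    classical
    set F := Finset.univ.filter
      (fun v' : V => σ v' = 1 ∧ 3 ≤ (bipGraph 𝔥).dist (Sum.inr v') (Sum.inl w₀)) with hF
    have hvF : v ∈ F := by simp [hF, hv, h3]
    obtain ⟨vs, hvsF, hmin⟩ := Finset.exists_min_image F
      (fun v' => (bipGraph 𝔥).dist (Sum.inr v') (Sum.inl w₀)) ⟨v, hvF⟩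
    simp only [hF, Finset.mem_filter, Finset.mem_univ, true_and] at hvsF
    obtain ⟨hvs1, hvs3⟩ := hvsF
    set ms := (bipGraph 𝔥).dist (Sum.inr vs) (Sum.inl w₀) with hms
    have hmsm : ms ≤ m := le_trans (hmin v hvF) hm
    rcases Nat.eq_or_lt_of_le hvs3 with h3eq | h3lt
    · -- base case : single move
      exact Relation.ReflTransGen.single ⟨w₀, vs, h3eq.symm, hvs1, rfl⟩
    · -- ms ≥ 5
      have hodd := dist_rl_odd hconn vs w₀
      have hms5 : 5 ≤ ms := by
        have : ms ≠ 4 := by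
          intro h4; rw [← hms, h4] at hodd; revert hodd; decide
        omega
      obtain ⟨z, z', hadj, hdz, hdz', hzy, hz'y⟩ := exists_mid hconn (hms.symm) (by omega : 2 + 1 ≤ ms)
      -- z = inr p2, z' = inl a
      have hparz : par z = (1 : ZMod 2) := by
        have h := par_of_dist hconn hdz
        rw [h]
        simp [par]
        decide
      have hparz' : par z' = (0 : ZMod 2) := by
        have h := par_of_dist hconn hdz'
        rw [h]
        simp [par]
        decide
      obtain ⟨p2, rfl⟩ := eq_inr_of_par hconn hparz
      obtain ⟨a, rfl⟩ := eq_inl_of_par hconn hparz'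
      have hap2 : 𝔥 a p2 = 1 := (adj_rl 𝔥).mp hadj
      have hvsa : (bipGraph 𝔥).dist (Sum.inr vs) (Sum.inl a) = 3 := hdz'
      have hp2w : (bipGraph 𝔥).dist (Sum.inr p2) (Sum.inl w₀) = ms - 2 := hzy
      have hσp2 : σ p2 = 0 := by
        rcases (by decide : ∀ x : ZMod 2, x = 0 ∨ x = 1) (σ p2) with h | h
        · exact h
        · exfalso
          have hp2F : p2 ∈ F := by
            simp only [hF, Finset.mem_filter, Finset.mem_univ, true_and]
            exact ⟨h, by omega⟩
          have := hmin p2 hp2F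
          rw [hp2w] at this
          omega
      set σ' := σ + rowf 𝔥 a with hσ'
      have hσ'p2 : σ' p2 = 1 := by
        simp only [hσ', Pi.add_apply, rowf, hσp2, hap2]
        decide
      have step1 : stepR 𝔥 σ σ' := ⟨a, vs, hvsa, hvs1, rfl⟩
      have ihconn : conn 𝔥 σ' (σ' + rowf 𝔥 w₀) := by
        refine IH (ms - 2) (by omega) σ' w₀ p2 hσ'p2 (by omega) (by omega)
      have hav : 𝔥 a vs = 0 := not_adj_of_dist_eq_three (𝔥 := 𝔥) hvsa
      have hwv : 𝔥 w₀ vs = 0 := by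
        rcases (by decide : ∀ x : ZMod 2, x = 0 ∨ x = 1) (𝔥 w₀ vs) with h | h
        · exact h
        · exfalso; have := dist_eq_one_of_adj (𝔥 := 𝔥) h; omega
      have step3 : stepR 𝔥 (σ' + rowf 𝔥 w₀) (σ' + rowf 𝔥 w₀ + rowf 𝔥 a) := by
        refine ⟨a, vs, hvsa, ?_, rfl⟩
        simp only [hσ', Pi.add_apply, rowf, hav, hwv, hvs1]
        decide
      have hfinal : σ' + rowf 𝔥 w₀ + rowf 𝔥 a = σ + rowf 𝔥 w₀ := by
        rw [hσ']
        funext t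
        simp only [Pi.add_apply, rowf]
        generalize σ t = x1; generalize 𝔥 a t = x2; generalize 𝔥 w₀ t = x3
        revert x1 x2 x3; decide
      have htail : conn 𝔥 σ' (σ + rowf 𝔥 w₀) := by
        rw [← hfinal]
        exact Relation.ReflTransGen.trans ihconn (Relation.ReflTransGen.single step3)
      exact Relation.ReflTransGen.trans (Relation.ReflTransGen.single step1) htail




variable [Nonempty Vhat] [Nonempty V]
variable {D Dhat : ℕ}
variable (hdegV : ∀ v : V, (Finset.univ.filter fun w : Vhat => 𝔥 w v = 1).card ≤ D)
variable (hdegVhat : ∀ w : Vhat, (Finset.univ.filter fun v : V => 𝔥 w v = 1).card ≤ Dhat)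
variable (hcard : 2 * D * Dhat < Fintype.card V)

omit hconn in
lemma zmod2_cases (x : ZMod 2) : x = 0 ∨ x = 1 := by revert x; decide

/-- helper extraction: positions 3 and 4 on a geodesic between two `V`-vertices. -/
lemma path34 {v1 u : V} (h4 : 4 ≤ (bipGraph 𝔥).dist (Sum.inr v1) (Sum.inr u)) :
    ∃ (a : Vhat) (x : V), (bipGraph 𝔥).dist (Sum.inr v1) (Sum.inl a) = 3 ∧
      (bipGraph 𝔥).dist (Sum.inr v1) (Sum.inr x) = 4 ∧ 𝔥 a x = 1 ∧
      (bipGraph 𝔥).dist (Sum.inl a) (Sum.inr u) =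
        (bipGraph 𝔥).dist (Sum.inr v1) (Sum.inr u) - 3 := by
  obtain ⟨z, z', hadj, hdz, hdz', hzy, _⟩ :=
    exists_mid hconn (rfl : (bipGraph 𝔥).dist (Sum.inr v1) (Sum.inr u) = _) (by omega : 3 + 1 ≤ _)
  have hparz : par z = (0 : ZMod 2) := by
    have h := par_of_dist hconn hdz
    rw [h]; simp [par]; decide
  have hparz' : par z' = (1 : ZMod 2) := by
    have h := par_of_dist hconn hdz'
    rw [h]; simp [par]; decide
  obtain ⟨a, rfl⟩ := eq_inl_of_par hconn hparz
  obtain ⟨x, rfl⟩ := eq_inr_of_par hconn hparz'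
  exact ⟨a, x, hdz, hdz', (adj_lr 𝔥).mp hadj, hzy⟩

/-- Case (b) of the main lemma: all support adjacent to `w₀`. -/
lemma caseB {σ : V → ZMod 2} {w₀ : Vhat} {v1 v2 : V} {a : Vhat} {x : V}
    (hS : ∀ v, σ v = 1 → 𝔥 w₀ v = 1)
    (hv1 : σ v1 = 1) (hv2 : σ v2 = 0) (hwv2 : 𝔥 w₀ v2 = 1)
    (h3a : (bipGraph 𝔥).dist (Sum.inr v1) (Sum.inl a) = 3)
    (hav2 : ¬ 𝔥 a v2 = 1)
    (hax : 𝔥 a x = 1)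
    (hx4 : (bipGraph 𝔥).dist (Sum.inr v1) (Sum.inr x) = 4) :
    conn 𝔥 σ (σ + rowf 𝔥 w₀) := by
  -- x is far from w₀
  have hwx : ¬ 𝔥 w₀ x = 1 := by
    intro hwx
    -- then dist x v1 ≤ 2 via w₀
    have hxw : (bipGraph 𝔥).dist (Sum.inr x) (Sum.inl w₀) = 1 := dist_eq_one_of_adj (𝔥 := 𝔥) hwx
    have hv1w : (bipGraph 𝔥).dist (Sum.inr v1) (Sum.inl w₀) = 1 :=
      dist_eq_one_of_adj (𝔥 := 𝔥) (hS v1 hv1)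
    have ht : (bipGraph 𝔥).dist (Sum.inr v1) (Sum.inr x) ≤
        (bipGraph 𝔥).dist (Sum.inr v1) (Sum.inl w₀) +
          (bipGraph 𝔥).dist (Sum.inl w₀) (Sum.inr x) := hconn.dist_triangle
    rw [SimpleGraph.dist_comm (u := (Sum.inl w₀ : Vhat ⊕ V))] at ht
    omega
  have hσx : σ x = 0 := by
    rcases zmod2_cases (σ x) with h | h
    · exact h
    · exact absurd (hS x h) hwx
  have hx3 : 3 ≤ (bipGraph 𝔥).dist (Sum.inr x) (Sum.inl w₀) :=
    three_le_dist_of_not_adj hconn hwx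
  have hv2a3 : 3 ≤ (bipGraph 𝔥).dist (Sum.inr v2) (Sum.inl a) :=
    three_le_dist_of_not_adj hconn hav2
  have hav1 : 𝔥 a v1 = 0 := not_adj_of_dist_eq_three (𝔥 := 𝔥) h3a
  -- step 1 : σ → σ1 = σ + r_a
  set σ1 := σ + rowf 𝔥 a with hσ1
  have step1 : stepR 𝔥 σ σ1 := ⟨a, v1, h3a, hv1, rfl⟩
  -- σ1 x = 1
  have hσ1x : σ1 x = 1 := by
    simp only [hσ1, Pi.add_apply, rowf, hσx, hax]; decide
  -- step 2 : tool gives σ1 → σ1 + r_{w₀}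
  have conn2 : conn 𝔥 σ1 (σ1 + rowf 𝔥 w₀) :=
    tool hconn _ σ1 w₀ x hσ1x hx3 (le_refl _)
  -- σ2 = σ1 + r_{w₀}; σ2 v2 = 1
  set σ2 := σ1 + rowf 𝔥 w₀ with hσ2
  have hav2' : 𝔥 a v2 = 0 := by rcases zmod2_cases (𝔥 a v2) with h | h; exact h; exact absurd h hav2
  have hσ2v2 : σ2 v2 = 1 := by
    simp only [hσ2, hσ1, Pi.add_apply, rowf, hv2, hav2', hwv2]; decide
  -- step 3 : tool gives σ2 → σ2 + r_a
  have conn3 : conn 𝔥 σ2 (σ2 + rowf 𝔥 a) :=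
    tool hconn _ σ2 a v2 hσ2v2 hv2a3 (le_refl _)
  have hfinal : σ2 + rowf 𝔥 a = σ + rowf 𝔥 w₀ := by
    rw [hσ2, hσ1]
    funext t
    simp only [Pi.add_apply, rowf]
    generalize σ t = x1; generalize 𝔥 a t = x2; generalize 𝔥 w₀ t = x3
    revert x1 x2 x3; decide
  rw [← hfinal]
  exact Relation.ReflTransGen.trans (Relation.ReflTransGen.single step1)
    (Relation.ReflTransGen.trans conn2 conn3)

include hdegV hdegVhat hcard in
/-- Main connectivity lemma: a single row flip can always be realised between
nonzero configurations. -/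
lemma genP (σ : V → ZMod 2) (w₀ : Vhat) (hσ : σ ≠ 0) (hτ : σ + rowf 𝔥 w₀ ≠ 0) :
    conn 𝔥 σ (σ + rowf 𝔥 w₀) := by
  classical
  by_cases hfar : ∃ v, σ v = 1 ∧ 3 ≤ (bipGraph 𝔥).dist (Sum.inr v) (Sum.inl w₀)
  · obtain ⟨v, hv, h3⟩ := hfar
    exact tool hconn _ σ w₀ v hv h3 (le_refl _)
  · push_neg at hfar
    -- all support adjacent to w₀
    have hS : ∀ v, σ v = 1 → 𝔥 w₀ v = 1 := by
      intro v hv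
      rcases zmod2_cases (𝔥 w₀ v) with h | h
      · exfalso
        exact absurd (three_le_dist_of_not_adj hconn (by rw [h]; decide)) (by
          have := hfar v hv; omega)
      · exact h
    -- v1 in support
    have hex1 : ∃ v1, σ v1 = 1 := by
      by_contra hc
      push_neg at hc
      apply hσ
      funext t
      rcases zmod2_cases (σ t) with h | h
      · exact h
      · exact absurd h (hc t)
    obtain ⟨v1, hv1⟩ := hex1
    -- v2 in support of σ + r_{w₀}
    have hex2 : ∃ v2, (σ + rowf 𝔥 w₀) v2 = 1 := by
      by_contra hc
      push_neg at hc
      apply hτ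
      funext t
      rcases zmod2_cases ((σ + rowf 𝔥 w₀) t) with h | h
      · exact h
      · exact absurd h (hc t)
    obtain ⟨v2, hv2'⟩ := hex2
    have hv2 : σ v2 = 0 ∧ 𝔥 w₀ v2 = 1 := by
      have := hv2'
      simp only [Pi.add_apply, rowf] at this
      rcases zmod2_cases (σ v2) with h | h
      · refine ⟨h, ?_⟩
        rw [h] at this
        rcases zmod2_cases (𝔥 w₀ v2) with h' | h'
        · rw [h'] at this; exact absurd this (by decide)
        · exact h'
      · exfalso
        have hw := hS v2 h
        rw [h, hw] at this
        exact absurd this (by decide)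
    obtain ⟨hv2z, hv2w⟩ := hv2
    -- far vertex u
    obtain ⟨u, hu1, hu2⟩ := exists_far hconn hdegV hdegVhat hcard v1 v2
    rw [SimpleGraph.dist_comm] at hu1 hu2
    obtain ⟨a, x, ha3, hx4, hax, hau⟩ := path34 hconn hu1
    obtain ⟨a', x', ha'3, hx'4, ha'x', ha'u⟩ := path34 hconn hu2
    -- dichotomy
    by_cases hd : 𝔥 a v2 = 1
    · -- then ¬ 𝔥 a' v1 = 1 ; work with σ + r_{w₀} and swap roles
      have hd' : ¬ 𝔥 a' v1 = 1 := by
        intro hd'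
        have e1 : (bipGraph 𝔥).dist (Sum.inr v2) (Sum.inl a) = 1 := dist_eq_one_of_adj (𝔥 := 𝔥) hd
        have e2 : (bipGraph 𝔥).dist (Sum.inr v1) (Sum.inl a') = 1 := dist_eq_one_of_adj (𝔥 := 𝔥) hd'
        have t1 : (bipGraph 𝔥).dist (Sum.inr v2) (Sum.inr u) ≤
            (bipGraph 𝔥).dist (Sum.inr v2) (Sum.inl a) +
              (bipGraph 𝔥).dist (Sum.inl a) (Sum.inr u) := hconn.dist_triangle
        have t2 : (bipGraph 𝔥).dist (Sum.inr v1) (Sum.inr u) ≤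
            (bipGraph 𝔥).dist (Sum.inr v1) (Sum.inl a') +
              (bipGraph 𝔥).dist (Sum.inl a') (Sum.inr u) := hconn.dist_triangle
        omega
      -- swapped case B
      set σ' := σ + rowf 𝔥 w₀ with hσ'def
      have hS' : ∀ v, σ' v = 1 → 𝔥 w₀ v = 1 := by
        intro v hv
        simp only [hσ'def, Pi.add_apply, rowf] at hv
        rcases zmod2_cases (σ v) with h | h
        · rcases zmod2_cases (𝔥 w₀ v) with h' | h'
          · rw [h, h'] at hv; exact absurd hv (by decide)
          · exact h'
        · exact hS v h
      have hσ'v2 : σ' v2 = 1 := hv2'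
      have hσ'v1 : σ' v1 = 0 := by
        simp only [hσ'def, Pi.add_apply, rowf, hv1, hS v1 hv1]; decide
      have hcb := caseB hconn hS' hσ'v2 hσ'v1 (hS v1 hv1) ha'3 hd' ha'x' hx'4
      have : σ' + rowf 𝔥 w₀ = σ := by
        rw [hσ'def]; exact add_add_cancel σ (rowf 𝔥 w₀)
      rw [this] at hcb
      exact conn_symm (𝔥 := 𝔥) hcb
    · exact caseB hconn hS hv1 hv2z hv2w ha3 hd hax hx4

/-- the row span -/
def rowSpan (𝔥 : Matrix Vhat V (ZMod 2)) : Submodule (ZMod 2) (V → ZMod 2) :=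
  Submodule.span (ZMod 2) (Set.range (rowf 𝔥))

include hdegV hdegVhat hcard in
lemma coset_conn {ρ : V → ZMod 2} (hρ : ρ ∈ rowSpan 𝔥) :
    ∀ σ : V → ZMod 2, σ ≠ 0 → σ + ρ ≠ 0 → conn 𝔥 σ (σ + ρ) := by
  induction hρ using Submodule.span_induction with
  | mem ρ' h =>
    obtain ⟨w, rfl⟩ := h
    intro σ h1 h2
    exact genP hconn hdegV hdegVhat hcard σ w h1 h2
  | zero =>
    intro σ h1 h2
    rw [add_zero]; exact Relation.ReflTransGen.refl
  | add ρ1 ρ2 hm1 hm2 ih1 ih2 =>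
    intro σ h1 h2
    by_cases hz1 : σ + ρ1 = 0
    · by_cases hz2 : σ + ρ2 = 0
      · -- then ρ1 = ρ2 = σ, so ρ1 + ρ2 = 0
        have key : ∀ st rt : ZMod 2, st + rt = 0 → rt = st := by decide
        have hr12 : ρ1 + ρ2 = 0 := by
          funext t
          have e1 := congrFun hz1 t
          have e2 := congrFun hz2 t
          simp only [Pi.add_apply, Pi.zero_apply] at e1 e2 ⊢
          rw [key _ _ e1, key _ _ e2]
          exact CharTwo.add_self_eq_zero _
        rw [hr12, add_zero]
        exact Relation.ReflTransGen.refl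
      · -- go through σ + ρ2 first
        have c1 : conn 𝔥 σ (σ + ρ2) := ih2 σ h1 hz2
        have c2 : conn 𝔥 (σ + ρ2) (σ + ρ2 + ρ1) := by
          apply ih1 _ hz2
          intro hc
          apply h2
          rw [← hc]
          abel
        have : σ + ρ2 + ρ1 = σ + (ρ1 + ρ2) := by abel
        rw [this] at c2
        exact Relation.ReflTransGen.trans c1 c2
    · have c1 : conn 𝔥 σ (σ + ρ1) := ih1 σ h1 hz1
      have c2 : conn 𝔥 (σ + ρ1) (σ + ρ1 + ρ2) := by
        apply ih2 _ hz1
        intro hc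
        apply h2
        rw [← hc]
        abel
      have : σ + ρ1 + ρ2 = σ + (ρ1 + ρ2) := by abel
      rw [this] at c2
      exact Relation.ReflTransGen.trans c1 c2
  | smul c ρ' hm ih =>
    intro σ h1 h2
    rcases zmod2_cases c with h | h
    · rw [h] at h2 ⊢
      rw [zero_smul, add_zero]; exact Relation.ReflTransGen.refl
    · rw [h] at h2 ⊢
      simpa using ih σ h1 (by simpa using h2)


end CssAux


variable {Vhat V Vtil : Type*} [Fintype Vhat] [Fintype V] [Fintype Vtil]
  [DecidableEq Vhat] [DecidableEq V] [DecidableEq Vtil]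

/-- The deformed Hamiltonian `H'` acting on `ℋ = EuclideanSpace ℂ (V → ZMod 2)`. -/
noncomputable def Hdef (𝔥 : Matrix Vhat V (ZMod 2)) :
    EuclideanSpace ℂ (V → ZMod 2) →ₗ[ℂ] EuclideanSpace ℂ (V → ZMod 2) where
  toFun ψ := WithLp.toLp 2 fun σ =>
    ∑ p : V × Vhat, if (bipGraph 𝔥).dist (Sum.inr p.1) (Sum.inl p.2) = 3 ∧ σ p.1 = 1
      then ψ σ - ψ (σ + fun v => 𝔥 p.2 v) else 0
  map_add' := by
    intro ψ φ
    ext σ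
    show (∑ p : V × Vhat, (_ : ℂ)) = (∑ p : V × Vhat, (_ : ℂ)) + (∑ p : V × Vhat, (_ : ℂ))
    rw [← Finset.sum_add_distrib]
    refine Finset.sum_congr rfl fun p _ => ?_
    by_cases hp : (bipGraph 𝔥).dist (Sum.inr p.1) (Sum.inl p.2) = 3 ∧ σ p.1 = 1
    · simp only [if_pos hp, PiLp.add_apply]
      ring
    · simp [if_neg hp]
  map_smul' := by
    intro c ψ
    ext σ
    show (∑ p : V × Vhat, (_ : ℂ)) = c * (∑ p : V × Vhat, (_ : ℂ))
    rw [Finset.mul_sum]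
    refine Finset.sum_congr rfl fun p _ => ?_
    by_cases hp : (bipGraph 𝔥).dist (Sum.inr p.1) (Sum.inl p.2) = 3 ∧ σ p.1 = 1
    · simp only [if_pos hp, PiLp.smul_apply, smul_eq_mul]
      ring
    · simp [if_neg hp]

/-- The diagonal coefficient `2·∑_{ṽ : r̃_ṽ·σ = 1} g ṽ` of the Gauss-law penalty term. -/
noncomputable def cssCoeff (𝔥t : Matrix Vtil V (ZMod 2)) (g : Vtil → ℝ)
    (σ : V → ZMod 2) : ℂ :=
  2 * ∑ t ∈ Finset.univ.filter fun t : Vtil => (∑ v, 𝔥t t v * σ v) = (1 : ZMod 2), (g t : ℂ)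

/-- The CSS-deformed Hamiltonian
`(H'_new ψ)(σ) = (H'ψ)(σ) + 2·(∑_{ṽ : r̃_ṽ·σ = 1} g ṽ)·ψ(σ)`. -/
noncomputable def Hcss (𝔥 : Matrix Vhat V (ZMod 2)) (𝔥t : Matrix Vtil V (ZMod 2))
    (g : Vtil → ℝ) :
    EuclideanSpace ℂ (V → ZMod 2) →ₗ[ℂ] EuclideanSpace ℂ (V → ZMod 2) where
  toFun ψ := WithLp.toLp 2 fun σ => (Hdef 𝔥 ψ) σ + cssCoeff 𝔥t g σ * ψ σ
  map_add' := by
    intro ψ φ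
    ext σ
    show (Hdef 𝔥 (ψ + φ)) σ + cssCoeff 𝔥t g σ * (ψ + φ) σ =
      ((Hdef 𝔥 ψ) σ + cssCoeff 𝔥t g σ * ψ σ) + ((Hdef 𝔥 φ) σ + cssCoeff 𝔥t g σ * φ σ)
    rw [map_add]
    simp only [PiLp.add_apply]
    ring
  map_smul' := by
    intro c ψ
    ext σ
    show (Hdef 𝔥 (c • ψ)) σ + cssCoeff 𝔥t g σ * (c • ψ) σ =
      c * ((Hdef 𝔥 ψ) σ + cssCoeff 𝔥t g σ * ψ σ)
    rw [map_smul]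
    simp only [PiLp.smul_apply, smul_eq_mul]
    ring

/-- The delta function at the all-zeros configuration. -/
noncomputable def delta0 : EuclideanSpace ℂ (V → ZMod 2) :=
  WithLp.toLp 2 fun σ => if σ = 0 then 1 else 0

/-- The Gauss-law-projected character `ψ_a(σ) = (−1)^{a·σ}·𝟙[𝔥̃σ = 0]`. -/
noncomputable def chiCss (𝔥t : Matrix Vtil V (ZMod 2)) (a : V → ZMod 2) :
    EuclideanSpace ℂ (V → ZMod 2) :=
  WithLp.toLp 2 fun σ => if 𝔥t.mulVec σ = 0 then
      (if (∑ v, a v * σ v) = (1 : ZMod 2) then -1 else 1) else 0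

namespace CssAnalysis

open CssAux

/-- extremal equality case for complex numbers -/
lemma complex_eq_of_re_eq {z z0 : ℂ} (hle : ‖z‖ ≤ ‖z0‖)
    (hre : ((starRingEnd ℂ) z0 * z).re = Complex.normSq z0) : z = z0 := by
  by_cases hz0 : z0 = 0
  · subst hz0
    simp only [norm_zero] at hle
    have habs : ‖z‖ = 0 := le_antisymm hle (norm_nonneg z)
    rw [norm_eq_zero.mp habs]
  · set w := (starRingEnd ℂ) z0 * z with hw
    have h1 : w.re ≤ ‖w‖ := Complex.re_le_norm w
    have h2 : ‖w‖ = ‖z0‖ * ‖z‖ := by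
      rw [hw, norm_mul, Complex.norm_conj]
    have h4 : ‖z0‖ * ‖z0‖ = Complex.normSq z0 := by
      rw [← Complex.sq_norm]; ring
    have hup : ‖w‖ ≤ Complex.normSq z0 := by
      rw [h2, ← h4]
      exact mul_le_mul_of_nonneg_left hle (norm_nonneg z0)
    have hwre : w.re = ‖w‖ := le_antisymm h1 (by rw [hre]; exact hup)
    have hsq : ‖w‖ ^ 2 = w.re ^ 2 + w.im ^ 2 := by
      rw [Complex.sq_norm, Complex.normSq_apply]; ring
    have him : w.im = 0 := by nlinarith [hsq, hwre]
    have hwval : w = ((Complex.normSq z0 : ℝ) : ℂ) := by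
      apply Complex.ext
      · rw [hre]; simp
      · rw [him]; simp
    have hz0conj : ((starRingEnd ℂ) z0) * z0 = ((Complex.normSq z0 : ℝ) : ℂ) := by
      rw [mul_comm, Complex.mul_conj]
    have : (starRingEnd ℂ) z0 * z = (starRingEnd ℂ) z0 * z0 := by
      rw [← hw, hwval, hz0conj]
    have hcne : (starRingEnd ℂ) z0 ≠ 0 := by
      simpa using hz0
    exact mul_left_cancel₀ hcne this

/-- the extremal principle for averages -/
lemma complex_max {ι : Type*} (s : Finset ι) (z : ι → ℂ) (z0 : ℂ) (c : ℝ) (hc : 0 ≤ c)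
    (hb : ∀ i ∈ s, ‖z i‖ ≤ ‖z0‖)
    (heq : ∑ i ∈ s, z i = ((s.card : ℂ) + (c : ℂ)) * z0) :
    (∀ i ∈ s, z i = z0) ∧ (c ≠ 0 → z0 = 0) := by
  have habs : ‖∑ i ∈ s, z i‖ ≤ (s.card : ℝ) * ‖z0‖ := by
    refine le_trans (norm_sum_le s z) ?_
    calc ∑ i ∈ s, ‖z i‖ ≤ ∑ _i ∈ s, ‖z0‖ := Finset.sum_le_sum hb
      _ = (s.card : ℝ) * ‖z0‖ := by
        rw [Finset.sum_const, nsmul_eq_mul]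
  have hcast : ((s.card : ℂ) + (c : ℂ)) = (((s.card : ℝ) + c : ℝ) : ℂ) := by push_cast; ring
  have habs2 : ‖∑ i ∈ s, z i‖ = ((s.card : ℝ) + c) * ‖z0‖ := by
    rw [heq, hcast, norm_mul, Complex.norm_real, Real.norm_of_nonneg (by positivity)]
  have hczero : c * ‖z0‖ = 0 := by
    have h0 : 0 ≤ c * ‖z0‖ := mul_nonneg hc (norm_nonneg z0)
    nlinarith [habs, habs2]
  constructor
  · by_cases hz0 : z0 = 0
    · intro i hi
      have := hb i hi
      rw [hz0] at this ⊢
      simp only [norm_zero] at this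
      exact norm_eq_zero.mp (le_antisymm this (norm_nonneg _))
    · -- c = 0 and the sum equality is tight
      have hcz : c = 0 := by
        rcases mul_eq_zero.mp hczero with h | h
        · exact h
        · exact absurd (norm_eq_zero.mp h) hz0
      subst hcz
      have heq' : ∑ i ∈ s, z i = (s.card : ℂ) * z0 := by rw [heq]; push_cast; ring
      intro i hi
      apply complex_eq_of_re_eq (hb i hi)
      by_contra hne
      have hle2 : ((starRingEnd ℂ) z0 * z i).re ≤ Complex.normSq z0 := by
        calc ((starRingEnd ℂ) z0 * z i).re ≤ ‖(starRingEnd ℂ) z0 * z i‖ :=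
              Complex.re_le_norm _
          _ = ‖z0‖ * ‖z i‖ := by rw [norm_mul, Complex.norm_conj]
          _ ≤ ‖z0‖ * ‖z0‖ :=
              mul_le_mul_of_nonneg_left (hb i hi) (norm_nonneg z0)
          _ = Complex.normSq z0 := by rw [← Complex.sq_norm]; ring
      have hlt : ((starRingEnd ℂ) z0 * z i).re < Complex.normSq z0 :=
        lt_of_le_of_ne hle2 hne
      have hsum : ∑ j ∈ s, ((starRingEnd ℂ) z0 * z j).re < ∑ _j ∈ s, Complex.normSq z0 := by
        refine Finset.sum_lt_sum (fun j hj => ?_) ⟨i, hi, hlt⟩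
        calc ((starRingEnd ℂ) z0 * z j).re ≤ ‖(starRingEnd ℂ) z0 * z j‖ :=
              Complex.re_le_norm _
          _ = ‖z0‖ * ‖z j‖ := by rw [norm_mul, Complex.norm_conj]
          _ ≤ ‖z0‖ * ‖z0‖ :=
              mul_le_mul_of_nonneg_left (hb j hj) (norm_nonneg z0)
          _ = Complex.normSq z0 := by rw [← Complex.sq_norm]; ring
      have hre_sum : ∑ j ∈ s, ((starRingEnd ℂ) z0 * z j).re
          = (s.card : ℝ) * Complex.normSq z0 := by
        have : ((starRingEnd ℂ) z0 * ∑ j ∈ s, z j).re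
            = (s.card : ℝ) * Complex.normSq z0 := by
          rw [heq']
          have : (starRingEnd ℂ) z0 * ((s.card : ℂ) * z0)
              = (s.card : ℂ) * ((Complex.normSq z0 : ℝ) : ℂ) := by
            rw [mul_comm ((starRingEnd ℂ) z0) _, mul_assoc, Complex.mul_conj]
          rw [this]
          simp [Complex.mul_re]
        rw [← this, Finset.mul_sum, Complex.re_sum]
      rw [hre_sum, Finset.sum_const, nsmul_eq_mul] at hsum
      exact absurd hsum (lt_irrefl _)
  · intro hcne
    rcases mul_eq_zero.mp hczero with h | h
    · exact absurd h hcne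
    · exact norm_eq_zero.mp h

variable (𝔥 : Matrix Vhat V (ZMod 2)) (𝔥t : Matrix Vtil V (ZMod 2)) (g : Vtil → ℝ)

/-- the set of active pairs at `σ` -/
noncomputable def Aset (σ : V → ZMod 2) : Finset (V × Vhat) :=
  Finset.univ.filter fun p : V × Vhat =>
    (bipGraph 𝔥).dist (Sum.inr p.1) (Sum.inl p.2) = 3 ∧ σ p.1 = 1

lemma Hdef_apply (ψ : EuclideanSpace ℂ (V → ZMod 2)) (σ : V → ZMod 2) :
    Hdef 𝔥 ψ σ = ∑ p : V × Vhat,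
      if (bipGraph 𝔥).dist (Sum.inr p.1) (Sum.inl p.2) = 3 ∧ σ p.1 = 1
      then ψ σ - ψ (σ + fun v => 𝔥 p.2 v) else 0 := rfl

lemma Hcss_apply (ψ : EuclideanSpace ℂ (V → ZMod 2)) (σ : V → ZMod 2) :
    Hcss 𝔥 𝔥t g ψ σ = Hdef 𝔥 ψ σ + cssCoeff 𝔥t g σ * ψ σ := rfl

lemma Hdef_sum (ψ : EuclideanSpace ℂ (V → ZMod 2)) (σ : V → ZMod 2) :
    Hdef 𝔥 ψ σ = ((Aset 𝔥 σ).card : ℂ) * ψ σ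
      - ∑ p ∈ Aset 𝔥 σ, ψ (σ + CssAux.rowf 𝔥 p.2) := by
  rw [Hdef_apply, ← Finset.sum_filter]
  rw [Finset.sum_sub_distrib, Finset.sum_const, nsmul_eq_mul]
  rfl

lemma cssCoeff_eq (σ : V → ZMod 2) :
    cssCoeff 𝔥t g σ = (((2 * ∑ t ∈ (Finset.univ.filter fun t : Vtil =>
      (∑ v, 𝔥t t v * σ v) = (1 : ZMod 2)), g t : ℝ)) : ℂ) := by
  rw [cssCoeff]
  push_cast
  ring

lemma cR_nonneg (hg : ∀ t : Vtil, 0 < g t) (σ : V → ZMod 2) :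
    (0 : ℝ) ≤ 2 * ∑ t ∈ (Finset.univ.filter fun t : Vtil =>
      (∑ v, 𝔥t t v * σ v) = (1 : ZMod 2)), g t := by
  have : (0:ℝ) ≤ ∑ t ∈ (Finset.univ.filter fun t : Vtil =>
      (∑ v, 𝔥t t v * σ v) = (1 : ZMod 2)), g t :=
    Finset.sum_nonneg (fun t _ => (hg t).le)
  linarith

lemma mulVec_apply' (σ : V → ZMod 2) (t : Vtil) :
    𝔥t.mulVec σ t = ∑ v, 𝔥t t v * σ v := rfl

lemma cR_pos (hg : ∀ t : Vtil, 0 < g t) (σ : V → ZMod 2) (hσ : 𝔥t.mulVec σ ≠ 0) :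
    (0 : ℝ) < 2 * ∑ t ∈ (Finset.univ.filter fun t : Vtil =>
      (∑ v, 𝔥t t v * σ v) = (1 : ZMod 2)), g t := by
  obtain ⟨t0, ht0⟩ := Function.ne_iff.mp hσ
  have ht0' : (∑ v, 𝔥t t0 v * σ v) = (1 : ZMod 2) := by
    rcases CssAux.zmod2_cases (𝔥t.mulVec σ t0) with h | h
    · exact absurd h ht0
    · rw [← mulVec_apply']; exact h
  have hpos : (0:ℝ) < ∑ t ∈ (Finset.univ.filter fun t : Vtil =>
      (∑ v, 𝔥t t v * σ v) = (1 : ZMod 2)), g t :=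
    Finset.sum_pos (fun t _ => hg t) ⟨t0, by simp [ht0']⟩
  linarith

lemma cssCoeff_zero (σ : V → ZMod 2) (hσ : 𝔥t.mulVec σ = 0) :
    cssCoeff 𝔥t g σ = 0 := by
  rw [cssCoeff]
  have hempty : (Finset.univ.filter fun t : Vtil =>
      (∑ v, 𝔥t t v * σ v) = (1 : ZMod 2)) = ∅ := by
    refine Finset.filter_eq_empty_iff.mpr (fun t _ => ?_)
    rw [← mulVec_apply', hσ]
    simp
  rw [hempty]
  simp

lemma ker_eq (ψ : EuclideanSpace ℂ (V → ZMod 2)) (hker : Hcss 𝔥 𝔥t g ψ = 0)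
    (σ : V → ZMod 2) :
    ∑ p ∈ Aset 𝔥 σ, ψ (σ + CssAux.rowf 𝔥 p.2)
      = (((Aset 𝔥 σ).card : ℂ) + cssCoeff 𝔥t g σ) * ψ σ := by
  have h0 : Hcss 𝔥 𝔥t g ψ σ = 0 := by rw [hker]; rfl
  rw [Hcss_apply, Hdef_sum] at h0
  linear_combination -h0

lemma ker_conn_eq (ψ : EuclideanSpace ℂ (V → ZMod 2)) (hker : Hcss 𝔥 𝔥t g ψ = 0)
    (hg : ∀ t : Vtil, 0 < g t) :
    ∀ σ τ, CssAux.conn 𝔥 σ τ → ψ σ = ψ τ := by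
  intro σ τ hστ
  classical
  set C := Finset.univ.filter (fun υ : V → ZMod 2 => CssAux.conn 𝔥 σ υ) with hC
  have hσC : σ ∈ C := by
    simp only [hC, Finset.mem_filter, Finset.mem_univ, true_and]
    exact Relation.ReflTransGen.refl
  obtain ⟨υs, hυsC, hmax⟩ := Finset.exists_max_image C (fun υ => ‖ψ υ‖) ⟨σ, hσC⟩
  have hconnσs : CssAux.conn 𝔥 σ υs := by
    simpa only [hC, Finset.mem_filter, Finset.mem_univ, true_and] using hυsC
  have prop : ∀ υ, CssAux.conn 𝔥 υs υ → ψ υ = ψ υs := by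
    intro υ h
    induction h with
    | refl => rfl
    | @tail b c hab hbc ih =>
      have hbC : CssAux.conn 𝔥 σ b := Relation.ReflTransGen.trans hconnσs hab
      have heqb := ker_eq 𝔥 𝔥t g ψ hker b
      rw [cssCoeff_eq] at heqb
      have hbnd : ∀ p ∈ Aset 𝔥 b,
          ‖ψ (b + CssAux.rowf 𝔥 p.2)‖ ≤ ‖ψ b‖ := by
        intro p hp
        simp only [Aset, Finset.mem_filter, Finset.mem_univ, true_and] at hp
        have hstep : CssAux.stepR 𝔥 b (b + CssAux.rowf 𝔥 p.2) := ⟨p.2, p.1, hp.1, hp.2, rfl⟩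
        have hmem : (b + CssAux.rowf 𝔥 p.2) ∈ C := by
          simp only [hC, Finset.mem_filter, Finset.mem_univ, true_and]
          exact Relation.ReflTransGen.tail hbC hstep
        have hb1 := hmax _ hmem
        rw [ih]
        exact hb1
      obtain ⟨hall, -⟩ := complex_max (Aset 𝔥 b) (fun p => ψ (b + CssAux.rowf 𝔥 p.2)) (ψ b)
        (2 * ∑ t ∈ (Finset.univ.filter fun t : Vtil =>
          (∑ v, 𝔥t t v * b v) = (1 : ZMod 2)), g t)
        (cR_nonneg 𝔥t g hg b) hbnd heqb
      obtain ⟨w, v, h3, hv, rfl⟩ := hbc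
      have hmemA : ((v, w) : V × Vhat) ∈ Aset 𝔥 b := by
        simp only [Aset, Finset.mem_filter, Finset.mem_univ, true_and]
        exact ⟨h3, hv⟩
      exact (hall (v, w) hmemA).trans ih
  have h1 := prop σ (CssAux.conn_symm (𝔥 := 𝔥) hconnσs)
  have h2 := prop τ (Relation.ReflTransGen.trans (CssAux.conn_symm (𝔥 := 𝔥) hconnσs) hστ)
  exact h1.trans h2.symm

lemma ker_vanish (ψ : EuclideanSpace ℂ (V → ZMod 2)) (hker : Hcss 𝔥 𝔥t g ψ = 0)
    (hg : ∀ t : Vtil, 0 < g t) :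
    ∀ σ, 𝔥t.mulVec σ ≠ 0 → ψ σ = 0 := by
  intro σ hσ
  have heq := ker_eq 𝔥 𝔥t g ψ hker σ
  have hall : ∀ p ∈ Aset 𝔥 σ, ψ (σ + CssAux.rowf 𝔥 p.2) = ψ σ := by
    intro p hp
    simp only [Aset, Finset.mem_filter, Finset.mem_univ, true_and] at hp
    exact (ker_conn_eq 𝔥 𝔥t g ψ hker hg σ _
      (Relation.ReflTransGen.single ⟨p.2, p.1, hp.1, hp.2, rfl⟩)).symm
  have hsum : ∑ p ∈ Aset 𝔥 σ, ψ (σ + CssAux.rowf 𝔥 p.2) = ((Aset 𝔥 σ).card : ℂ) * ψ σ := by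
    rw [Finset.sum_congr rfl hall, Finset.sum_const, nsmul_eq_mul]
  have hcψ : cssCoeff 𝔥t g σ * ψ σ = 0 := by linear_combination hsum - heq
  have hcne : cssCoeff 𝔥t g σ ≠ 0 := by
    rw [cssCoeff_eq]
    exact_mod_cast (cR_pos 𝔥t g hg σ hσ).ne'
  rcases mul_eq_zero.mp hcψ with h | h
  · exact absurd h hcne
  · exact h

lemma Hcss_eq_zero_of (ψ : EuclideanSpace ℂ (V → ZMod 2))
    (hstep : ∀ σ τ, CssAux.stepR 𝔥 σ τ → ψ σ = ψ τ)
    (hvan : ∀ σ, 𝔥t.mulVec σ ≠ 0 → ψ σ = 0) : Hcss 𝔥 𝔥t g ψ = 0 := by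
  ext σ
  show Hdef 𝔥 ψ σ + cssCoeff 𝔥t g σ * ψ σ = 0
  have h1 : Hdef 𝔥 ψ σ = 0 := by
    rw [Hdef_apply]
    apply Finset.sum_eq_zero
    intro p _
    split_ifs with hp
    · exact sub_eq_zero.mpr (hstep σ (σ + fun v => 𝔥 p.2 v) ⟨p.2, p.1, hp.1, hp.2, rfl⟩)
    · rfl
  rw [h1, zero_add]
  by_cases hσ : 𝔥t.mulVec σ = 0
  · rw [cssCoeff_zero 𝔥t g σ hσ]; ring
  · rw [hvan σ hσ]; ring

/-! ### Fourier analysis over `ZMod 2` -/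

/-- pairing -/
def dotP (a σ : V → ZMod 2) : ZMod 2 := ∑ v, a v * σ v

/-- sign character -/
noncomputable def sgn (a σ : V → ZMod 2) : ℂ := if dotP a σ = 1 then -1 else 1

omit [Fintype Vhat] [DecidableEq Vhat] [Fintype Vtil] [DecidableEq Vtil] in
lemma dotP_add_right (a σ τ : V → ZMod 2) : dotP a (σ + τ) = dotP a σ + dotP a τ := by
  simp only [dotP, Pi.add_apply, mul_add]
  rw [Finset.sum_add_distrib]

omit [Fintype Vhat] [DecidableEq Vhat] [Fintype Vtil] [DecidableEq Vtil] in
lemma dotP_add_left (a b σ : V → ZMod 2) : dotP (a + b) σ = dotP a σ + dotP b σ := by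
  simp only [dotP, Pi.add_apply, add_mul]
  rw [Finset.sum_add_distrib]

omit [Fintype Vhat] [DecidableEq Vhat] [Fintype Vtil] [DecidableEq Vtil] in
lemma sgn_add_right (a σ τ : V → ZMod 2) : sgn a (σ + τ) = sgn a σ * sgn a τ := by
  unfold sgn
  rw [dotP_add_right]
  rcases CssAux.zmod2_cases (dotP a σ) with h1 | h1 <;>
    rcases CssAux.zmod2_cases (dotP a τ) with h2 | h2 <;>
      rw [h1, h2] <;> norm_num <;> decide

omit [Fintype Vhat] [DecidableEq Vhat] [Fintype Vtil] [DecidableEq Vtil] in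
lemma sgn_add_left (a b σ : V → ZMod 2) : sgn (a + b) σ = sgn a σ * sgn b σ := by
  unfold sgn
  rw [dotP_add_left]
  rcases CssAux.zmod2_cases (dotP a σ) with h1 | h1 <;>
    rcases CssAux.zmod2_cases (dotP b σ) with h2 | h2 <;>
      rw [h1, h2] <;> norm_num <;> decide

omit [Fintype Vtil] [DecidableEq Vtil] in
/-- vectors orthogonal to `ker 𝔥` lie in the row span -/
lemma mem_rowSpan_of_perp (τ : V → ZMod 2)
    (hτ : ∀ a, 𝔥.mulVec a = 0 → dotP a τ = 0) : τ ∈ CssAux.rowSpan 𝔥 := by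
  classical
  set M : (V → ZMod 2) →ₗ[ZMod 2] (Vhat → ZMod 2) := Matrix.mulVecLin 𝔥 with hM
  have hMa : ∀ a, M a = 𝔥.mulVec a := fun a => rfl
  set f : (V → ZMod 2) →ₗ[ZMod 2] ZMod 2 :=
    { toFun := fun x => dotP x τ
      map_add' := fun x y => dotP_add_left x y τ
      map_smul' := by
        intro c x
        simp only [RingHom.id_apply, dotP, Pi.smul_apply, smul_eq_mul]
        rw [Finset.mul_sum]
        congr 1; funext v; ring } with hf
  have hkerle : LinearMap.ker M ≤ LinearMap.ker f := by
    intro a ha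
    rw [LinearMap.mem_ker] at ha ⊢
    exact hτ a (by rw [← hMa]; exact ha)
  set g0 : ((V → ZMod 2) ⧸ LinearMap.ker M) →ₗ[ZMod 2] ZMod 2 :=
    (LinearMap.ker M).liftQ f hkerle with hg0
  set e := M.quotKerEquivRange with he
  set g1 : LinearMap.range M →ₗ[ZMod 2] ZMod 2 := g0 ∘ₗ (e.symm : LinearMap.range M →ₗ[ZMod 2] _) with hg1
  obtain ⟨G, hG⟩ := g1.exists_extend
  have key : ∀ x, G (M x) = f x := by
    intro x
    have hmem : M x ∈ LinearMap.range M := ⟨x, rfl⟩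
    have h1 : G (M x) = g1 ⟨M x, hmem⟩ := by
      have := congrArg (fun (h : LinearMap.range M →ₗ[ZMod 2] ZMod 2) => h ⟨M x, hmem⟩) hG
      simpa using this
    rw [h1, hg1]
    have hsymm : e.symm ⟨M x, hmem⟩ = Submodule.Quotient.mk x := by
      rw [LinearEquiv.symm_apply_eq, he]
      exact Subtype.ext (M.quotKerEquivRange_apply_mk x).symm
    simp only [LinearMap.coe_comp, Function.comp_apply, LinearEquiv.coe_coe]
    rw [hsymm, hg0]
    exact Submodule.liftQ_apply _ f x
  -- now express τ as combination of rows
  set c : Vhat → ZMod 2 := fun w => G (Pi.single w 1) with hc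
  have hGy : ∀ y : Vhat → ZMod 2, G y = ∑ w, y w * c w := by
    intro y
    have hy : y = ∑ w, y w • Pi.single w (1 : ZMod 2) := by
      funext u
      rw [Finset.sum_apply]
      simp [Pi.single_apply, Finset.sum_ite_eq', mul_comm]
    conv_lhs => rw [hy]
    rw [map_sum]
    congr 1; funext w
    rw [map_smul]
    simp [hc, smul_eq_mul]
  have hτv : ∀ v, τ v = ∑ w, c w * 𝔥 w v := by
    intro v
    have h1 : f (Pi.single v 1) = τ v := by
      simp only [hf, LinearMap.coe_mk, AddHom.coe_mk, dotP]
      rw [Fintype.sum_eq_single v (fun u hu => by simp [Pi.single_apply, hu])]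
      simp
    have h2 : M (Pi.single v 1) = fun w => 𝔥 w v := by
      rw [hMa]
      funext w
      rw [Matrix.mulVec_single]
      exact mul_one _
    rw [← h1, ← key, h2, hGy]
    congr 1; funext w; ring
  have hτsum : τ = ∑ w, c w • CssAux.rowf 𝔥 w := by
    funext v
    rw [Finset.sum_apply]
    rw [hτv v]
    refine Finset.sum_congr rfl (fun w _ => ?_)
    simp [CssAux.rowf, smul_eq_mul]
  rw [hτsum]
  exact Submodule.sum_mem _ (fun w _ =>
    Submodule.smul_mem _ _ (Submodule.subset_span ⟨w, rfl⟩))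

omit [Fintype Vtil] [DecidableEq Vtil] in
lemma dot_rowSpan_zero (a : V → ZMod 2) (ha : 𝔥.mulVec a = 0) {τ : V → ZMod 2}
    (hτ : τ ∈ CssAux.rowSpan 𝔥) : dotP a τ = 0 := by
  induction hτ using Submodule.span_induction with
  | mem ρ h =>
    obtain ⟨w, rfl⟩ := h
    have : dotP a (CssAux.rowf 𝔥 w) = 𝔥.mulVec a w := by
      simp only [dotP, CssAux.rowf, Matrix.mulVec, dotProduct]
      congr 1; funext v; ring
    rw [this, ha]
    rfl
  | zero => simp [dotP]
  | add ρ1 ρ2 _ _ ih1 ih2 => rw [dotP_add_right, ih1, ih2]; rfl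
  | smul k ρ _ ih =>
    rcases CssAux.zmod2_cases k with h | h <;> rw [h]
    · simp [dotP]
    · simpa using ih

/-- the kernel as a finset -/
noncomputable def Kfin (𝔥 : Matrix Vhat V (ZMod 2)) : Finset (V → ZMod 2) :=
  Finset.univ.filter fun a => 𝔥.mulVec a = 0

omit [Fintype Vtil] [DecidableEq Vtil] in
lemma sum_sgn_eq (τ : V → ZMod 2) :
    ∑ a ∈ Kfin 𝔥, sgn a τ
      = if τ ∈ CssAux.rowSpan 𝔥 then ((Kfin 𝔥).card : ℂ) else 0 := by
  classical
  by_cases hτ : τ ∈ CssAux.rowSpan 𝔥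
  · rw [if_pos hτ]
    rw [Finset.sum_congr rfl (fun a ha => ?_), Finset.sum_const, nsmul_eq_mul, mul_one]
    simp only [Kfin, Finset.mem_filter, Finset.mem_univ, true_and] at ha
    have := dot_rowSpan_zero 𝔥 a ha hτ
    simp [sgn, this]
  · rw [if_neg hτ]
    have hex : ∃ a₀, 𝔥.mulVec a₀ = 0 ∧ dotP a₀ τ = 1 := by
      by_contra hcon
      push_neg at hcon
      apply hτ
      apply mem_rowSpan_of_perp
      intro a ha
      rcases CssAux.zmod2_cases (dotP a τ) with h | h
      · exact h
      · exact absurd h (hcon a ha)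
    obtain ⟨a₀, ha₀K, ha₀d⟩ := hex
    have hre : ∑ a ∈ Kfin 𝔥, sgn (a + a₀) τ = ∑ a ∈ Kfin 𝔥, sgn a τ := by
      refine Finset.sum_nbij' (fun a => a + a₀) (fun a => a + a₀) ?_ ?_ ?_ ?_ ?_
      · intro a ha
        simp only [Kfin, Finset.mem_filter, Finset.mem_univ, true_and] at ha ⊢
        rw [Matrix.mulVec_add, ha, ha₀K, add_zero]
      · intro a ha
        simp only [Kfin, Finset.mem_filter, Finset.mem_univ, true_and] at ha ⊢
        rw [Matrix.mulVec_add, ha, ha₀K, add_zero]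
      · intro a _; exact CssAux.add_add_cancel a a₀
      · intro a _; exact CssAux.add_add_cancel a a₀
      · intro a _
        rfl
    have hflip : ∀ a, sgn (a + a₀) τ = - sgn a τ := by
      intro a
      rw [sgn_add_left]
      have : sgn a₀ τ = -1 := by simp [sgn, ha₀d]
      rw [this]; ring
    rw [Finset.sum_congr rfl (fun a _ => hflip a)] at hre
    have h2 : (2:ℂ) * ∑ a ∈ Kfin 𝔥, sgn a τ = 0 := by
      rw [Finset.sum_neg_distrib] at hre
      linear_combination - hre
    rcases mul_eq_zero.mp h2 with h | h
    · norm_num at h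
    · exact h

/-- the row span as a finset -/
noncomputable def Rfin (𝔥 : Matrix Vhat V (ZMod 2)) : Finset (V → ZMod 2) :=
  Finset.univ.filter fun ρ => ρ ∈ CssAux.rowSpan 𝔥

omit [Fintype Vhat] [DecidableEq Vhat] in
lemma chiCss_apply' (a σ : V → ZMod 2) :
    chiCss 𝔥t a σ = if 𝔥t.mulVec σ = 0 then sgn a σ else 0 := rfl

lemma fourier_expansion (h : (V → ZMod 2) → ℂ)
    (hH1 : ∀ σ τ : V → ZMod 2, σ + τ ∈ CssAux.rowSpan 𝔥 → h σ = h τ)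
    (hH2 : ∀ σ, 𝔥t.mulVec σ ≠ 0 → h σ = 0) (σ : V → ZMod 2) :
    ∑ a ∈ Kfin 𝔥, ((((Kfin 𝔥).card : ℂ) * ((Rfin 𝔥).card : ℂ))⁻¹ *
      (∑ τ, h τ * sgn a τ)) * chiCss 𝔥t a σ = h σ := by
  classical
  by_cases hσ : 𝔥t.mulVec σ = 0
  · have hK0 : (0 : V → ZMod 2) ∈ Kfin 𝔥 := by
      simp [Kfin, Matrix.mulVec_zero]
    have hR0 : (0 : V → ZMod 2) ∈ Rfin 𝔥 := by
      simp only [Rfin, Finset.mem_filter, Finset.mem_univ, true_and]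
      exact Submodule.zero_mem _
    have hKne : ((Kfin 𝔥).card : ℂ) ≠ 0 :=
      Nat.cast_ne_zero.mpr (Finset.card_ne_zero_of_mem hK0)
    have hRne : ((Rfin 𝔥).card : ℂ) ≠ 0 :=
      Nat.cast_ne_zero.mpr (Finset.card_ne_zero_of_mem hR0)
    set Cinv : ℂ := (((Kfin 𝔥).card : ℂ) * ((Rfin 𝔥).card : ℂ))⁻¹ with hCinv
    have step1 : ∑ a ∈ Kfin 𝔥, (Cinv * (∑ τ, h τ * sgn a τ)) * chiCss 𝔥t a σ
        = Cinv * ∑ a ∈ Kfin 𝔥, ∑ τ, h τ * sgn a τ * sgn a σ := by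
      rw [Finset.mul_sum]
      refine Finset.sum_congr rfl (fun a _ => ?_)
      rw [chiCss_apply', if_pos hσ]
      calc (Cinv * (∑ τ, h τ * sgn a τ)) * sgn a σ
          = Cinv * ((∑ τ, h τ * sgn a τ) * sgn a σ) := by ring
        _ = Cinv * (∑ τ, h τ * sgn a τ * sgn a σ) := by rw [Finset.sum_mul]
    have step2 : ∑ a ∈ Kfin 𝔥, ∑ τ, h τ * sgn a τ * sgn a σ
        = ∑ τ, h τ * ∑ a ∈ Kfin 𝔥, sgn a (τ + σ) := by
      rw [Finset.sum_comm]
      refine Finset.sum_congr rfl (fun τ _ => ?_)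
      rw [Finset.mul_sum]
      refine Finset.sum_congr rfl (fun a _ => ?_)
      rw [sgn_add_right]
      ring
    have step3 : ∑ τ, h τ * ∑ a ∈ Kfin 𝔥, sgn a (τ + σ)
        = ∑ τ ∈ Finset.univ.filter (fun τ : V → ZMod 2 => τ + σ ∈ CssAux.rowSpan 𝔥),
            h τ * ((Kfin 𝔥).card : ℂ) := by
      rw [Finset.sum_filter]
      refine Finset.sum_congr rfl (fun τ _ => ?_)
      rw [sum_sgn_eq]
      by_cases hmem : τ + σ ∈ CssAux.rowSpan 𝔥
      · rw [if_pos hmem, if_pos hmem]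
      · rw [if_neg hmem, if_neg hmem, mul_zero]
    have hcardeq : (Finset.univ.filter
        (fun τ : V → ZMod 2 => τ + σ ∈ CssAux.rowSpan 𝔥)).card = (Rfin 𝔥).card := by
      apply Finset.card_nbij' (fun τ => τ + σ) (fun ρ => ρ + σ)
      · intro τ hτ
        simp only [Finset.mem_coe, Finset.mem_filter, Finset.mem_univ, true_and] at hτ
        simp only [Rfin, Finset.mem_coe, Finset.mem_filter, Finset.mem_univ, true_and]
        exact hτ
      · intro ρ hρ
        simp only [Rfin, Finset.mem_coe, Finset.mem_filter, Finset.mem_univ, true_and] at hρ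
        simp only [Finset.mem_coe, Finset.mem_filter, Finset.mem_univ, true_and]
        rw [CssAux.add_add_cancel]
        exact hρ
      · intro τ _; exact CssAux.add_add_cancel τ σ
      · intro ρ _; exact CssAux.add_add_cancel ρ σ
    have step4 : ∑ τ ∈ Finset.univ.filter (fun τ : V → ZMod 2 =>
          τ + σ ∈ CssAux.rowSpan 𝔥), h τ * ((Kfin 𝔥).card : ℂ)
        = ((Rfin 𝔥).card : ℂ) * (h σ * ((Kfin 𝔥).card : ℂ)) := by
      have hval : ∀ τ ∈ Finset.univ.filter (fun τ : V → ZMod 2 =>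
          τ + σ ∈ CssAux.rowSpan 𝔥), h τ * ((Kfin 𝔥).card : ℂ)
            = h σ * ((Kfin 𝔥).card : ℂ) := by
        intro τ hτ
        simp only [Finset.mem_filter, Finset.mem_univ, true_and] at hτ
        rw [hH1 τ σ hτ]
      rw [Finset.sum_congr rfl hval, Finset.sum_const, nsmul_eq_mul, hcardeq]
    rw [step1, step2, step3, step4, hCinv]
    field_simp
  · rw [hH2 σ hσ]
    apply Finset.sum_eq_zero
    intro a _
    rw [chiCss_apply', if_neg hσ, mul_zero]

end CssAnalysis



/-- STATEMENT 18: under the standing assumptions, if `𝔥 · 𝔥̃ᵀ = 0` and all `g ṽ > 0`, the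
kernel of the CSS-deformed Hamiltonian `H'_new` equals the span of `δ₀` together with the
Gauss-law-projected characters `ψ_a`, `a ∈ ker 𝔥`. -/
theorem kernel_of_css_deformed_hamiltonian
    [Nonempty Vhat] [Nonempty V]
    (𝔥 : Matrix Vhat V (ZMod 2)) (𝔥t : Matrix Vtil V (ZMod 2)) (g : Vtil → ℝ)
    (D Dhat : ℕ) (hD : 1 ≤ D) (hDhat : 1 ≤ Dhat)
    (hconn : (bipGraph 𝔥).Connected)
    (hdegV : ∀ v : V, (Finset.univ.filter fun w : Vhat => 𝔥 w v = 1).card ≤ D)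
    (hdegVhat : ∀ w : Vhat, (Finset.univ.filter fun v : V => 𝔥 w v = 1).card ≤ Dhat)
    (hcard : 2 * D * Dhat < Fintype.card V)
    (hCSS : 𝔥 * 𝔥t.transpose = 0)
    (hg : ∀ t : Vtil, 0 < g t) :
    LinearMap.ker (Hcss 𝔥 𝔥t g) =
      Submodule.span ℂ
        ({delta0} ∪ {ψ | ∃ a : V → ZMod 2, 𝔥.mulVec a = 0 ∧ ψ = chiCss 𝔥t a}) := by
  classical
  apply le_antisymm
  · -- kernel is contained in the span
    intro ψ hψ
    have hker : Hcss 𝔥 𝔥t g ψ = 0 := LinearMap.mem_ker.mp hψ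
    have hvan := CssAnalysis.ker_vanish 𝔥 𝔥t g ψ hker hg
    have hconst : ∀ σ τ : V → ZMod 2, σ ≠ 0 → τ ≠ 0 →
        σ + τ ∈ CssAux.rowSpan 𝔥 → ψ σ = ψ τ := by
      intro σ τ hσ hτ hmem
      have hτσ : σ + (σ + τ) = τ := by
        funext t
        simp only [Pi.add_apply]
        generalize σ t = x; generalize τ t = y
        revert x y; decide
      have hc := CssAux.coset_conn hconn hdegV hdegVhat hcard hmem σ hσ
        (by rw [hτσ]; exact hτ)
      rw [hτσ] at hc
      exact CssAnalysis.ker_conn_eq 𝔥 𝔥t g ψ hker hg σ τ hc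
    obtain ⟨v₀⟩ := ‹Nonempty V›
    obtain ⟨wE, hwE⟩ := CssAux.exists_neighbor hconn v₀
    set σR := CssAux.rowf 𝔥 wE with hσRdef
    have hσRne : σR ≠ 0 := by
      intro h0
      have := congrFun h0 v₀
      rw [hσRdef] at this
      simp only [CssAux.rowf, Pi.zero_apply] at this
      rw [hwE] at this
      exact absurd this (by decide)
    have hσRmem : σR ∈ CssAux.rowSpan 𝔥 := Submodule.subset_span ⟨wE, rfl⟩
    set ψR : ℂ := ψ σR with hψRdef
    set h : (V → ZMod 2) → ℂ := fun σ => if σ = 0 then ψR else ψ σ with hh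
    have hH1 : ∀ σ τ : V → ZMod 2, σ + τ ∈ CssAux.rowSpan 𝔥 → h σ = h τ := by
      intro σ τ hmem
      by_cases hσ : σ = 0 <;> by_cases hτ : τ = 0
      · rw [hσ, hτ]
      · -- σ = 0, τ ≠ 0 : τ ∈ rowSpan
        rw [hσ, zero_add] at hmem
        rw [hh]
        simp only [if_pos hσ, if_neg hτ]
        exact hconst σR τ hσRne hτ (Submodule.add_mem _ hσRmem hmem)
      · rw [hτ, add_zero] at hmem
        rw [hh]
        simp only [if_pos hτ, if_neg hσ]
        exact (hconst σR σ hσRne hσ (Submodule.add_mem _ hσRmem hmem)).symm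
      · rw [hh]
        simp only [if_neg hσ, if_neg hτ]
        exact hconst σ τ hσ hτ hmem
    have hH2 : ∀ σ, 𝔥t.mulVec σ ≠ 0 → h σ = 0 := by
      intro σ hσ
      have hσ0 : σ ≠ 0 := by
        intro h0
        exact hσ (by rw [h0]; exact Matrix.mulVec_zero _)
      rw [hh]
      simp only [if_neg hσ0]
      exact hvan σ hσ
    have hexp := fun σ => CssAnalysis.fourier_expansion 𝔥 𝔥t h hH1 hH2 σ
    have hψeq : ψ = (∑ a ∈ CssAnalysis.Kfin 𝔥,
        ((((CssAnalysis.Kfin 𝔥).card : ℂ) * ((CssAnalysis.Rfin 𝔥).card : ℂ))⁻¹ *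
          (∑ τ, h τ * CssAnalysis.sgn a τ)) • chiCss 𝔥t a)
        + (ψ 0 - ψR) • delta0 := by
      ext σ
      have hsum_apply : (∑ a ∈ CssAnalysis.Kfin 𝔥,
          ((((CssAnalysis.Kfin 𝔥).card : ℂ) * ((CssAnalysis.Rfin 𝔥).card : ℂ))⁻¹ *
            (∑ τ, h τ * CssAnalysis.sgn a τ)) • chiCss 𝔥t a) σ
          = ∑ a ∈ CssAnalysis.Kfin 𝔥,
            ((((CssAnalysis.Kfin 𝔥).card : ℂ) * ((CssAnalysis.Rfin 𝔥).card : ℂ))⁻¹ *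
              (∑ τ, h τ * CssAnalysis.sgn a τ)) * chiCss 𝔥t a σ := by
        rw [WithLp.ofLp_sum, Finset.sum_apply]
        rfl
      rw [PiLp.add_apply, PiLp.smul_apply, smul_eq_mul, hsum_apply, hexp σ]
      have hd : delta0 σ = if σ = 0 then (1:ℂ) else 0 := rfl
      by_cases hσ0 : σ = 0
      · subst hσ0
        rw [hd, if_pos rfl, hh]
        simp only [if_pos rfl, eq_self_iff_true, if_true]
        ring
      · rw [hd, if_neg hσ0, hh]
        simp only [if_neg hσ0]
        ring
    rw [hψeq]
    apply Submodule.add_mem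
    · apply Submodule.sum_mem
      intro a ha
      apply Submodule.smul_mem
      apply Submodule.subset_span
      apply Set.mem_union_right
      refine ⟨a, ?_, rfl⟩
      simpa only [CssAnalysis.Kfin, Finset.mem_filter, Finset.mem_univ, true_and] using ha
    · apply Submodule.smul_mem
      apply Submodule.subset_span
      exact Set.mem_union_left _ rfl
  · -- the span is contained in the kernel
    rw [Submodule.span_le]
    rintro φ (hφ | ⟨a, ha, rfl⟩)
    · rw [Set.mem_singleton_iff] at hφ
      subst hφ
      rw [SetLike.mem_coe, LinearMap.mem_ker]
      apply CssAnalysis.Hcss_eq_zero_of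
      · rintro σ τ ⟨w, v, h3, hv, rfl⟩
        have h𝔥wv : 𝔥 w v = 0 := CssAux.not_adj_of_dist_eq_three (𝔥 := 𝔥) h3
        have hσ0 : σ ≠ 0 := by
          intro h0
          rw [h0] at hv
          exact absurd hv (by simpa using (by decide : ¬ ((0 : ZMod 2) = 1)))
        have hτ0 : σ + CssAux.rowf 𝔥 w ≠ 0 := by
          intro h0
          have := congrFun h0 v
          simp only [Pi.add_apply, CssAux.rowf, Pi.zero_apply] at this
          rw [hv, h𝔥wv] at this
          exact absurd this (by decide)
        show delta0 σ = delta0 (σ + CssAux.rowf 𝔥 w)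
        show (if σ = 0 then (1:ℂ) else 0) = (if σ + CssAux.rowf 𝔥 w = 0 then (1:ℂ) else 0)
        rw [if_neg hσ0, if_neg hτ0]
      · intro σ hσ
        have hσ0 : σ ≠ 0 := by
          intro h0
          exact hσ (by rw [h0]; exact Matrix.mulVec_zero _)
        show (if σ = 0 then (1:ℂ) else 0) = 0
        rw [if_neg hσ0]
    · rw [SetLike.mem_coe, LinearMap.mem_ker]
      apply CssAnalysis.Hcss_eq_zero_of
      · rintro σ τ ⟨w, v, h3, hv, rfl⟩
        have hmul : 𝔥t.mulVec (σ + CssAux.rowf 𝔥 w) = 𝔥t.mulVec σ := by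
          rw [Matrix.mulVec_add]
          have hz : 𝔥t.mulVec (CssAux.rowf 𝔥 w) = 0 := by
            funext t
            have hm := congrFun (congrFun hCSS w) t
            rw [Matrix.mul_apply] at hm
            simp only [Matrix.transpose_apply, Matrix.zero_apply] at hm
            show ∑ v', 𝔥t t v' * CssAux.rowf 𝔥 w v' = 0
            simp only [CssAux.rowf]
            rw [← hm]
            exact Finset.sum_congr rfl (fun v' _ => mul_comm _ _)
          rw [hz, add_zero]
        have hdotz : CssAnalysis.dotP a (CssAux.rowf 𝔥 w) = 0 :=
          CssAnalysis.dot_rowSpan_zero 𝔥 a ha (Submodule.subset_span ⟨w, rfl⟩)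
        have hdot : (∑ v', a v' * (σ + CssAux.rowf 𝔥 w) v') = (∑ v', a v' * σ v') := by
          have := CssAnalysis.dotP_add_right a σ (CssAux.rowf 𝔥 w)
          rw [hdotz, add_zero] at this
          exact this
        show chiCss 𝔥t a σ = chiCss 𝔥t a (σ + CssAux.rowf 𝔥 w)
        simp only [chiCss, WithLp.ofLp_toLp]
        rw [hmul, hdot]
      · intro σ hσ
        show chiCss 𝔥t a σ = 0
        simp only [chiCss, WithLp.ofLp_toLp]
        rw [if_neg hσ]

end
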